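/- arXiv:1104.2911 — 2 statements merged into one kernel-verified Lean document; each statement's English description precedes it below -/
import Mathlib

section
/- Let A be a compact infinite metric space and let μ be an upper α-regular measure on A with μ(A) > 0, for some α > 0. Let w be an SLP weight on A such that sup_{x ∈ A} ‖w(·,x)‖_{L^{p₀}(μ)} < ∞ for some 1 < p₀ ≤ ∞. Suppose 1 < p ≤ p₀ and s > α(1 − 1/p). Then there exists a constant C₁ > 0, independent of N, such that for every N ≥ 2, every N-point (s,w)-energy minimizing configuration ω*_N on A satisfies δ(ω*_N) ≥ C₁ · N^{−(1/α + 1/(s p))}. -/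
open Metric MeasureTheory Filter
open scoped ENNReal NNReal

noncomputable section

variable {A : Type*} [MetricSpace A]

/-- The separation distance `δ(ω_N)` of a configuration of `N` points. -/
def sepDist {N : ℕ} (x : Fin N → A) : ℝ :=
  sInf {d : ℝ | ∃ i j : Fin N, i ≠ j ∧ d = dist (x i) (x j)}

/-- The mesh norm (covering radius) `ρ(ω_N, K)` of a configuration with respect to `K`. -/
def meshNorm {N : ℕ} (x : Fin N → A) (K : Set A) : ℝ :=
  sSup {d : ℝ | ∃ y ∈ K, d = ⨅ i : Fin N, dist y (x i)}

/-- The weighted Riesz `(s,w)`-energy of a configuration. -/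
def rieszEnergy {N : ℕ} (s : ℝ) (w : A → A → ℝ) (x : Fin N → A) : ℝ :=
  ∑ i : Fin N, ∑ j : Fin N, if i = j then 0 else w (x i) (x j) / dist (x i) (x j) ^ s

/-- `x` is an `N`-point `(s,w)`-energy minimizing configuration on `K`. -/
def IsEnergyMinimizer {N : ℕ} (s : ℝ) (w : A → A → ℝ) (K : Set A) (x : Fin N → A) : Prop :=
  Function.Injective x ∧ (∀ i, x i ∈ K) ∧
    ∀ y : Fin N → A, Function.Injective y → (∀ i, y i ∈ K) →
      rieszEnergy s w x ≤ rieszEnergy s w y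

/-- The `N`-point best-packing distance `δ_N(K)`. -/
def bestPackingDist (K : Set A) (N : ℕ) : ℝ :=
  sSup {d : ℝ | ∃ x : Fin N → A, Function.Injective x ∧ (∀ i, x i ∈ K) ∧ d = sepDist x}

/-- The `N`-point mesh norm `ρ_N(K)`. -/
def meshNormN (K : Set A) (N : ℕ) : ℝ :=
  sInf {d : ℝ | ∃ x : Fin N → A, Function.Injective x ∧ (∀ i, x i ∈ K) ∧ d = meshNorm x K}

/-- The minimal `N`-point `(s,w)`-energy `𝓔_s^w(N,K)`. -/
def minEnergy (s : ℝ) (w : A → A → ℝ) (K : Set A) (N : ℕ) : ℝ :=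
  sInf {E : ℝ | ∃ x : Fin N → A, Function.Injective x ∧ (∀ i, x i ∈ K) ∧ E = rieszEnergy s w x}

/-- `μ` is upper `α`-regular with constant `C₀`. -/
def IsUpperRegular [MeasurableSpace A] (μ : Measure A) (α C₀ : ℝ) : Prop :=
  ∀ (x : A) (r : ℝ), 0 < r → r ≤ diam (Set.univ : Set A) →
    μ (closedBall x r) ≤ ENNReal.ofReal (C₀ * r ^ α)

/-- `μ` is lower `α`-regular with constant `c₀`. -/
def IsLowerRegular [MeasurableSpace A] (μ : Measure A) (α c₀ : ℝ) : Prop :=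
  ∀ (x : A) (r : ℝ), 0 < r → r ≤ diam (Set.univ : Set A) →
    ENNReal.ofReal (c₀⁻¹ * r ^ α) ≤ μ (closedBall x r)

/-- `w` is an SLP weight on `K`: symmetric, lower semi-continuous on `K × K`,
nonnegative, and positive on the diagonal. -/
def IsSLPWeight (w : A → A → ℝ) (K : Set A) : Prop :=
  (∀ x ∈ K, ∀ y ∈ K, 0 ≤ w x y) ∧
  (∀ x ∈ K, ∀ y ∈ K, w x y = w y x) ∧
  LowerSemicontinuousOn (fun p : A × A => w p.1 p.2) (K ×ˢ K) ∧
  (∀ x ∈ K, 0 < w x x)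

/-!
Let `δ = d(x_i, x_j)` be attained by a minimizer. Moving `x_i` to any other free point `y` cannot
lower the energy, so `x_i` minimizes the potential `U_i(y) = ∑_{k ≠ i} w(y, x_k) / d(y, x_k)^s` of
the remaining points. Averaging over the set `D` of points at distance `> r = c N^{-1/α}` from all
`x_k`, which by upper regularity carries at least half of the mass, gives
`w(x_i, x_j) δ^{-s} μ(A) / 2 ≤ ∑_k ∫_{d(y, x_k) > r} w(y, x_k) d(y, x_k)^{-s} dμ(y)`.
Hölder's inequality with the conjugate exponent `q` of `p`, together with a dyadic-shell estimate
of `∫_{d(y, z) > r} d(y, z)^{-sq} dμ ≲ r^{α - sq}` (here `sq > α` is exactly `s > α(1 - 1/p)`),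
bounds each term by `‖w‖_p (r^{α - sq})^{1/q}`, whence `w(x_i, x_j) / δ^s ≲ N^{s/α + 1/p}`.
Since an SLP weight is bounded below near the diagonal, either `δ` is bounded below or
`δ ≳ N^{-(1/α + 1/(sp))}`.
-/

theorem LowerSemicontinuous.exists_pos_lt_of_dist_lt
    [CompactSpace A] {w : A → A → ℝ} (hw : LowerSemicontinuous fun p : A × A => w p.1 p.2)
    (hdiag : ∀ x, 0 < w x x) :
    ∃ ε > 0, ∃ c > 0, ∀ x y, dist x y < ε → c < w x y := by
  rcases isEmpty_or_nonempty A with hA | ⟨⟨a⟩⟩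
  · exact ⟨1, one_pos, 1, one_pos, fun x => isEmptyElim x⟩
  have hw_diag : LowerSemicontinuous fun x => w x x :=
    hw.comp (continuous_id.prodMk continuous_id)
  obtain ⟨x₀, -, hx₀⟩ := LowerSemicontinuousOn.exists_isMinOn ⟨a, Set.mem_univ a⟩
    isCompact_univ (hw_diag.lowerSemicontinuousOn _)
  set c := w x₀ x₀ / 2
  have hcdiag : ∀ x, c < w x x := fun x =>
    (half_lt_self (hdiag x₀)).trans_le (hx₀ (Set.mem_univ x))
  -- the sublevel set `{w ≤ c}` is compact and misses the diagonal, so `dist` is bounded below on it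
  have hF : IsCompact {p : A × A | w p.1 p.2 ≤ c} := (hw.isClosed_preimage c).isCompact
  obtain ⟨ε, hε, hεF⟩ := hF.exists_forall_le' continuous_dist.continuousOn (a := 0)
    fun p (hp : w p.1 p.2 ≤ c) => dist_pos.2 fun h => (hcdiag p.2).not_ge (by rwa [h] at hp)
  exact ⟨ε, hε, c, half_pos (hdiag x₀), fun x y hxy => not_le.1 fun h => (hεF (x, y) h).not_gt hxy⟩

theorem exists_dist_eq_sepDist {N : ℕ} (hN : 2 ≤ N) (x : Fin N → A) :
    ∃ i j, i ≠ j ∧ dist (x i) (x j) = sepDist x := by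
  have hfin : {d : ℝ | ∃ i j : Fin N, i ≠ j ∧ d = dist (x i) (x j)}.Finite :=
    (Set.finite_range fun p : Fin N × Fin N => dist (x p.1) (x p.2)).subset
      fun _ ⟨i, j, _, hd⟩ => ⟨(i, j), hd.symm⟩
  have hne : {d : ℝ | ∃ i j : Fin N, i ≠ j ∧ d = dist (x i) (x j)}.Nonempty :=
    ⟨_, ⟨0, by omega⟩, ⟨1, by omega⟩, Fin.ne_of_val_ne zero_ne_one, rfl⟩
  obtain ⟨i, j, hij, hd⟩ := hne.csInf_mem hfin
  exact ⟨i, j, hij, hd.symm⟩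

section Potential

variable {N : ℕ}

def potentialErase (s : ℝ) (w : A → A → ℝ) (x : Fin N → A) (i : Fin N) (y : A) : ℝ :=
  ∑ j ∈ Finset.univ.erase i, w y (x j) / dist y (x j) ^ s

theorem rieszEnergy_eq_two_mul_potentialErase_add {s : ℝ} {w : A → A → ℝ}
    (hsym : ∀ a b, w a b = w b a) (x : Fin N → A) (i : Fin N) :
    rieszEnergy s w x = 2 * potentialErase s w x i (x i) +
      ∑ a ∈ Finset.univ.erase i, ∑ b ∈ Finset.univ.erase i,
        if a = b then 0 else w (x a) (x b) / dist (x a) (x b) ^ s := by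
  have hpair : ∀ a b, w (x a) (x b) / dist (x a) (x b) ^ s
      = w (x b) (x a) / dist (x b) (x a) ^ s := fun a b => by rw [hsym, dist_comm]
  simp only [rieszEnergy, ← Finset.add_sum_erase _ _ (Finset.mem_univ i), if_pos,
    Finset.sum_add_distrib]
  have hrow : ∑ j ∈ Finset.univ.erase i,
      (if i = j then 0 else w (x i) (x j) / dist (x i) (x j) ^ s) = potentialErase s w x i (x i) :=
    Finset.sum_congr rfl fun j hj => if_neg (Finset.ne_of_mem_erase hj).symm
  have hcol : ∑ j ∈ Finset.univ.erase i,
      (if j = i then 0 else w (x j) (x i) / dist (x j) (x i) ^ s) = potentialErase s w x i (x i) :=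
    Finset.sum_congr rfl fun j hj => by rw [if_neg (Finset.ne_of_mem_erase hj), hpair]
  rw [hrow, hcol]
  ring

theorem IsEnergyMinimizer.potentialErase_le {s : ℝ} {w : A → A → ℝ} {K : Set A}
    {x : Fin N → A} (hx : IsEnergyMinimizer s w K x) (hsym : ∀ a b, w a b = w b a) (i : Fin N)
    {y : A} (hyK : y ∈ K) (hy : ∀ j ≠ i, y ≠ x j) :
    potentialErase s w x i (x i) ≤ potentialErase s w x i y := by
  classical
  set z := Function.update x i y
  have hzi : z i = y := Function.update_self i y x
  have hzj : ∀ j ≠ i, z j = x j := fun j hj => Function.update_of_ne hj y x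
  have hz_inj : Function.Injective z := by
    intro a b hab
    by_cases ha : a = i <;> by_cases hb : b = i
    · rw [ha, hb]
    · exact absurd (hzi ▸ hzj b hb ▸ ha ▸ hab) (hy b hb)
    · exact absurd (hzi ▸ hzj a ha ▸ hb ▸ hab.symm) (hy a ha)
    · exact hx.1 (hzj a ha ▸ hzj b hb ▸ hab)
  have hz_mem : ∀ j, z j ∈ K := fun j => by
    by_cases hj : j = i
    · exact hj ▸ hzi ▸ hyK
    · exact hzj j hj ▸ hx.2.1 j
  have hE := hx.2.2 z hz_inj hz_mem
  rw [rieszEnergy_eq_two_mul_potentialErase_add hsym x i,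
    rieszEnergy_eq_two_mul_potentialErase_add hsym z i] at hE
  have hU : potentialErase s w z i (z i) = potentialErase s w x i y :=
    Finset.sum_congr rfl fun j hj => by rw [hzi, hzj j (Finset.ne_of_mem_erase hj)]
  have hR : ∑ a ∈ Finset.univ.erase i, ∑ b ∈ Finset.univ.erase i,
      (if a = b then 0 else w (z a) (z b) / dist (z a) (z b) ^ s) =
      ∑ a ∈ Finset.univ.erase i, ∑ b ∈ Finset.univ.erase i,
      (if a = b then 0 else w (x a) (x b) / dist (x a) (x b) ^ s) :=
    Finset.sum_congr rfl fun a ha => Finset.sum_congr rfl fun b hb => by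
      rw [hzj a (Finset.ne_of_mem_erase ha), hzj b (Finset.ne_of_mem_erase hb)]
  linarith

end Potential

theorem ENNReal.HolderConjugate.one_div_toReal_eq {p q : ℝ≥0∞} [p.HolderConjugate q] :
    1 / q.toReal = 1 - 1 / p.toReal := by
  have h := congrArg ENNReal.toReal (ENNReal.HolderConjugate.inv_add_inv_eq_one p q)
  rw [ENNReal.toReal_add (ENNReal.inv_ne_top.2 (ENNReal.HolderConjugate.ne_zero p q))
    (ENNReal.inv_ne_top.2 (ENNReal.HolderConjugate.ne_zero q p)), ENNReal.toReal_inv,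
    ENNReal.toReal_inv, ENNReal.toReal_one] at h
  rw [one_div, one_div]
  linarith

theorem pos_of_mul_one_sub_one_div_toReal_lt {α s : ℝ} {p : ℝ≥0∞} (hα : 0 ≤ α) (hp : 1 ≤ p)
    (hs : α * (1 - 1 / p.toReal) < s) : 0 < s := by
  have : ENNReal.HolderConjugate p (ENNReal.conjExponent p) := .conjExponent hp
  rw [← ENNReal.HolderConjugate.one_div_toReal_eq (q := ENNReal.conjExponent p)] at hs
  exact (mul_nonneg hα (by positivity)).trans_lt hs

theorem le_of_div_rpow_le_mul_rpow {a δ E n s γ : ℝ} (ha : 0 ≤ a) (hδ : 0 < δ) (hE : 0 < E)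
    (hn : 0 < n) (hs : 0 < s) (h : a / δ ^ s ≤ E * n ^ (s * γ)) :
    (a / E) ^ (1 / s) * n ^ (-γ) ≤ δ := by
  have h' : a / E ≤ (δ * n ^ γ) ^ s := by
    rw [Real.mul_rpow hδ.le (by positivity), ← Real.rpow_mul hn.le, mul_comm γ, div_le_iff₀ hE]
    rw [div_le_iff₀ (by positivity)] at h
    linarith
  have h'' : (a / E) ^ (1 / s) ≤ δ * n ^ γ := by
    simpa [← Real.rpow_mul (by positivity : 0 ≤ δ * n ^ γ), hs.ne'] using
      Real.rpow_le_rpow (by positivity) h' (by positivity : 0 ≤ 1 / s)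
  rw [Real.rpow_neg hn.le, ← div_eq_mul_inv, div_le_iff₀ (by positivity)]
  exact h''

theorem min_mul_rpow_neg_le {ε B δ n γ : ℝ} (hε : 0 ≤ ε) (hB : 0 ≤ B) (hn : 1 ≤ n) (hγ : 0 ≤ γ)
    (h : δ < ε → B * n ^ (-γ) ≤ δ) : min ε B * n ^ (-γ) ≤ δ := by
  have hnγ : n ^ (-γ) ≤ 1 := Real.rpow_le_one_of_one_le_of_nonpos hn (neg_nonpos.2 hγ)
  rcases le_or_gt ε δ with hεδ | hδε
  · nlinarith [min_le_left ε B, le_min hε hB, Real.rpow_nonneg (zero_le_one.trans hn) (-γ)]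
  · exact (mul_le_mul_of_nonneg_right (min_le_right _ _) (by positivity)).trans (h hδε)

theorem mul_mul_rpow_rpow_eq {n c K α β q : ℝ} (hn : 0 < n) (hc : 0 ≤ c) (hK : 0 ≤ K)
    (hα : α ≠ 0) :
    n * (K * (c * n ^ (-(1 / α))) ^ (α - β)) ^ (1 / q) =
      K ^ (1 / q) * c ^ ((α - β) / q) * n ^ (1 + (β / α - 1) / q) := by
  have he : -(1 / α) * (α - β) * (1 / q) = (β / α - 1) / q := by field_simp; ring
  rw [Real.mul_rpow hK (by positivity), Real.mul_rpow (by positivity) (by positivity),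
    Real.mul_rpow (by positivity) (by positivity), ← Real.rpow_mul hc,
    ← Real.rpow_mul hn.le, ← Real.rpow_mul hn.le, he, Real.rpow_add hn, Real.rpow_one,
    mul_one_div]
  ring

theorem compl_closedBall_subset_iUnion_dyadic (z : A) {r : ℝ} (hr : 0 < r) :
    (closedBall z r)ᶜ ⊆ ⋃ k : ℕ, closedBall z (2 ^ (k + 1) * r) \ closedBall z (2 ^ k * r) := by
  intro y hy
  by_contra hcon
  simp only [Set.mem_iUnion, Set.mem_sdiff, mem_closedBall, not_exists, not_and, not_not] at hcon
  have hlt : ∀ k : ℕ, 2 ^ k * r < dist y z := by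
    intro k
    induction k with
    | zero => simpa using hy
    | succ k ih => exact not_le.1 fun h => ih.not_ge (hcon k h)
  obtain ⟨k, hk⟩ := pow_unbounded_of_one_lt (dist y z / r) one_lt_two
  exact (hlt k).not_ge ((div_lt_iff₀ hr).1 hk).le

section Measure

variable [MeasurableSpace A] {μ : Measure A} {α C₀ : ℝ}

theorem IsUpperRegular.measure_univ_le [CompactSpace A] [Nontrivial A]
    (h : IsUpperRegular μ α C₀) :
    μ Set.univ ≤ ENNReal.ofReal (C₀ * diam (Set.univ : Set A) ^ α) := by
  obtain ⟨a, b, hab⟩ := exists_pair_ne A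
  have hbdd : Bornology.IsBounded (Set.univ : Set A) := isCompact_univ.isBounded
  have hdiam : 0 < diam (Set.univ : Set A) :=
    (dist_pos.2 hab).trans_le (dist_le_diam_of_mem hbdd trivial trivial)
  calc μ Set.univ ≤ μ (closedBall a (diam Set.univ)) :=
        measure_mono fun y _ => dist_le_diam_of_mem hbdd trivial trivial
    _ ≤ _ := h a _ hdiam le_rfl

theorem IsUpperRegular.measure_univ_ne_top [CompactSpace A] [Nontrivial A]
    (h : IsUpperRegular μ α C₀) : μ Set.univ ≠ ∞ :=
  ne_top_of_le_ne_top ENNReal.ofReal_ne_top h.measure_univ_le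

theorem IsUpperRegular.const_pos [CompactSpace A] [Nontrivial A] (h : IsUpperRegular μ α C₀)
    (hμ : 0 < μ Set.univ) : 0 < C₀ :=
  pos_of_mul_pos_left (ENNReal.ofReal_pos.1 (hμ.trans_le h.measure_univ_le))
    (Real.rpow_nonneg diam_nonneg _)

theorem IsUpperRegular.measure_closedBall_le [CompactSpace A] [Nontrivial A]
    (h : IsUpperRegular μ α C₀) (hα : 0 ≤ α) (hC₀ : 0 ≤ C₀) (x : A) {t : ℝ} (ht : 0 < t) :
    μ (closedBall x t) ≤ ENNReal.ofReal (C₀ * t ^ α) := by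
  rcases le_or_gt t (diam (Set.univ : Set A)) with htd | htd
  · exact h x t ht htd
  · calc μ (closedBall x t) ≤ μ Set.univ := measure_mono (Set.subset_univ _)
      _ ≤ _ := h.measure_univ_le
      _ ≤ _ := ENNReal.ofReal_le_ofReal <| mul_le_mul_of_nonneg_left
          (Real.rpow_le_rpow diam_nonneg htd.le hα) hC₀

theorem setLIntegral_dyadicShell_rpow_neg_le {β : ℝ} (hC₀ : 0 ≤ C₀) (hβ : 0 ≤ β)
    (hball : ∀ z t, 0 < t → μ (closedBall z t) ≤ ENNReal.ofReal (C₀ * t ^ α))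
    (z : A) {r : ℝ} (hr : 0 < r) (k : ℕ) :
    ∫⁻ y in closedBall z (2 ^ (k + 1) * r) \ closedBall z (2 ^ k * r),
        ENNReal.ofReal (dist y z ^ (-β)) ∂μ ≤
      ENNReal.ofReal (C₀ * 2 ^ α * r ^ (α - β)) * ENNReal.ofReal (2 ^ (α - β)) ^ k := by
  set u : ℝ := 2 ^ k
  have hu : 0 < u := by positivity
  have hθk : ((2 : ℝ) ^ (α - β)) ^ k = u ^ (α - β) := by
    rw [← Real.rpow_mul_natCast zero_le_two, mul_comm, Real.rpow_natCast_mul zero_le_two]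
  calc _ ≤ ∫⁻ _ in closedBall z (2 ^ (k + 1) * r) \ closedBall z (2 ^ k * r),
          ENNReal.ofReal ((u * r) ^ (-β)) ∂μ :=
        setLIntegral_mono measurable_const fun y hy => ENNReal.ofReal_le_ofReal <|
          Real.rpow_le_rpow_of_nonpos (by positivity)
            (not_le.1 fun h => hy.2 (mem_closedBall.2 h)).le (neg_nonpos.2 hβ)
    _ ≤ ENNReal.ofReal ((u * r) ^ (-β)) * ENNReal.ofReal (C₀ * (2 * u * r) ^ α) := by
        rw [setLIntegral_const]
        gcongr
        exact (measure_mono Set.sdiff_subset).trans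
          (by simpa [u, pow_succ, mul_comm] using hball z _ (by positivity))
    _ = _ := by
        rw [← ENNReal.ofReal_mul (by positivity), ← ENNReal.ofReal_pow (by positivity),
          ← ENNReal.ofReal_mul (by positivity), hθk, Real.mul_rpow (by positivity) hr.le,
          Real.mul_rpow (by positivity) hr.le, Real.mul_rpow zero_le_two hu.le,
          Real.rpow_sub hu, Real.rpow_sub hr, Real.rpow_neg hu.le, Real.rpow_neg hr.le]
        congr 1
        field_simp

theorem lintegral_compl_closedBall_rpow_neg_le {β : ℝ} (hC₀ : 0 ≤ C₀) (hβ : 0 ≤ β)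
    (hαβ : α < β) (hball : ∀ z t, 0 < t → μ (closedBall z t) ≤ ENNReal.ofReal (C₀ * t ^ α))
    (z : A) {r : ℝ} (hr : 0 < r) :
    ∫⁻ y in (closedBall z r)ᶜ, ENNReal.ofReal (dist y z ^ (-β)) ∂μ ≤
      ENNReal.ofReal (C₀ * 2 ^ α / (1 - 2 ^ (α - β)) * r ^ (α - β)) := by
  have hθ : 0 < (2 : ℝ) ^ (α - β) := by positivity
  have hθ1 : (2 : ℝ) ^ (α - β) < 1 :=
    Real.rpow_lt_one_of_one_lt_of_neg one_lt_two (sub_neg.2 hαβ)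
  calc ∫⁻ y in (closedBall z r)ᶜ, ENNReal.ofReal (dist y z ^ (-β)) ∂μ
      ≤ ∫⁻ y in ⋃ k : ℕ, closedBall z (2 ^ (k + 1) * r) \ closedBall z (2 ^ k * r),
          ENNReal.ofReal (dist y z ^ (-β)) ∂μ :=
        lintegral_mono_set (compl_closedBall_subset_iUnion_dyadic z hr)
    _ ≤ ∑' k : ℕ,
          ENNReal.ofReal (C₀ * 2 ^ α * r ^ (α - β)) * ENNReal.ofReal (2 ^ (α - β)) ^ k :=
        (lintegral_iUnion_le _ _).trans (ENNReal.tsum_le_tsum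
          (setLIntegral_dyadicShell_rpow_neg_le hC₀ hβ hball z hr))
    _ = _ := by
        rw [ENNReal.tsum_mul_left, ENNReal.tsum_geometric, ← ENNReal.ofReal_one,
          ← ENNReal.ofReal_sub _ hθ.le, ← ENNReal.ofReal_inv_of_pos (by linarith),
          ← ENNReal.ofReal_mul (by positivity)]
        congr 1
        ring

theorem measure_compl_iUnion_closedBall_ge {N : ℕ}
    (hball : ∀ z t, 0 < t → μ (closedBall z t) ≤ ENNReal.ofReal (C₀ * t ^ α))
    (x : Fin N → A) {r : ℝ} (hr : 0 < r) :
    μ Set.univ - ENNReal.ofReal (N * (C₀ * r ^ α)) ≤ μ (⋃ k, closedBall (x k) r)ᶜ := by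
  have hU : μ (⋃ k, closedBall (x k) r) ≤ ENNReal.ofReal (N * (C₀ * r ^ α)) :=
    calc μ (⋃ k, closedBall (x k) r) ≤ ∑ k, μ (closedBall (x k) r) := measure_iUnion_fintype_le _ _
      _ ≤ ∑ _k : Fin N, ENNReal.ofReal (C₀ * r ^ α) := Finset.sum_le_sum fun k _ => hball _ _ hr
      _ = ENNReal.ofReal (N * (C₀ * r ^ α)) := by
        rw [ENNReal.ofReal_mul (Nat.cast_nonneg N), ENNReal.ofReal_natCast]; simp
  rw [tsub_le_iff_right]
  calc μ Set.univ ≤ μ (⋃ k, closedBall (x k) r)ᶜ + μ (⋃ k, closedBall (x k) r) := by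
        rw [← Set.compl_union_self (⋃ k, closedBall (x k) r)]; exact measure_union_le _ _
    _ ≤ _ := by gcongr

theorem ofReal_half_le_measure_compl_iUnion_closedBall (hα : 0 < α) (hC₀ : 0 < C₀)
    (hball : ∀ z t, 0 < t → μ (closedBall z t) ≤ ENNReal.ofReal (C₀ * t ^ α))
    (hμ : 0 < μ Set.univ) (hμfin : μ Set.univ ≠ ∞) {N : ℕ} (hN : 0 < N) (x : Fin N → A) :
    ENNReal.ofReal ((μ Set.univ).toReal / 2) ≤ μ (⋃ k, closedBall (x k)
      (((μ Set.univ).toReal / (2 * C₀)) ^ (1 / α) * (N : ℝ) ^ (-(1 / α))))ᶜ := by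
  set m := (μ Set.univ).toReal
  have hm : 0 < m := ENNReal.toReal_pos hμ.ne' hμfin
  have hn : (0 : ℝ) < N := Nat.cast_pos.2 hN
  have hNr : N * (C₀ * ((m / (2 * C₀)) ^ (1 / α) * (N : ℝ) ^ (-(1 / α))) ^ α) = m / 2 := by
    rw [Real.mul_rpow (by positivity) (by positivity), ← Real.rpow_mul hn.le,
      ← Real.rpow_mul (by positivity), neg_mul, one_div_mul_cancel hα.ne', Real.rpow_neg_one,
      Real.rpow_one]
    field_simp
  have h := measure_compl_iUnion_closedBall_ge hball x
    (r := (m / (2 * C₀)) ^ (1 / α) * (N : ℝ) ^ (-(1 / α)))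
    (by positivity)
  rwa [hNr, ← ENNReal.ofReal_toReal hμfin, ← ENNReal.ofReal_sub _ (by positivity),
    sub_half] at h

end Measure

section Minimizer

variable [MeasurableSpace A] [OpensMeasurableSpace A] {μ : Measure A} {N : ℕ} {s : ℝ}
  {w : A → A → ℝ} {x : Fin N → A}

theorem setLIntegral_div_rpow_le {p q : ℝ≥0∞} [p.HolderConjugate q] (hq : q ≠ ∞) {f : A → ℝ}
    (hf : AEStronglyMeasurable f μ) (z : A) (s : ℝ) (E : Set A) :
    ∫⁻ y in E, ENNReal.ofReal (f y / dist y z ^ s) ∂μ ≤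
      eLpNorm f p μ * (∫⁻ y in E, ENNReal.ofReal (dist y z ^ (-(s * q.toReal))) ∂μ) ^
        (1 / q.toReal) := by
  set g : A → ℝ := fun y => dist y z ^ (-s)
  have hg : AEStronglyMeasurable g (μ.restrict E) :=
    ((continuous_id.dist continuous_const).measurable.pow_const _).aestronglyMeasurable
  have hgq : ∀ y, ‖g y‖ₑ ^ q.toReal = ENNReal.ofReal (dist y z ^ (-(s * q.toReal))) := fun y => by
    rw [Real.enorm_eq_ofReal (by positivity), ENNReal.ofReal_rpow_of_nonneg (by positivity)
      ENNReal.toReal_nonneg, ← Real.rpow_mul dist_nonneg, neg_mul]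
  calc ∫⁻ y in E, ENNReal.ofReal (f y / dist y z ^ s) ∂μ
      ≤ ∫⁻ y in E, ‖(f • g) y‖ₑ ∂μ := lintegral_mono fun y => by
        simpa only [Pi.smul_apply, smul_eq_mul, Pi.mul_apply, g, Real.rpow_neg dist_nonneg,
          div_eq_mul_inv]
          using Real.ofReal_le_enorm _
    _ = eLpNorm (f • g) 1 (μ.restrict E) := eLpNorm_one_eq_lintegral_enorm.symm
    _ ≤ eLpNorm f p (μ.restrict E) * eLpNorm g q (μ.restrict E) :=
        eLpNorm_smul_le_mul_eLpNorm hg hf.restrict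
    _ ≤ _ := by
        rw [eLpNorm_eq_lintegral_rpow_enorm_toReal (ENNReal.HolderConjugate.ne_zero q p) hq]
        simp only [hgq]
        gcongr
        exact Measure.restrict_le_self

theorem IsEnergyMinimizer.ofReal_div_rpow_mul_measure_le_sum
    (hx : IsEnergyMinimizer s w Set.univ x) (hsym : ∀ a b, w a b = w b a)
    (hw0 : ∀ a b, 0 ≤ w a b) (hwm : ∀ z, Measurable fun y => w y z) {i j : Fin N} (hij : i ≠ j)
    {r : ℝ} (hr : 0 < r) :
    ENNReal.ofReal (w (x i) (x j) / dist (x i) (x j) ^ s) * μ (⋃ k, closedBall (x k) r)ᶜ ≤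
      ∑ k ∈ Finset.univ.erase i,
        ∫⁻ y in (closedBall (x k) r)ᶜ, ENNReal.ofReal (w y (x k) / dist y (x k) ^ s) ∂μ := by
  set D := (⋃ k, closedBall (x k) r)ᶜ
  have hterm0 : ∀ y k, 0 ≤ w y (x k) / dist y (x k) ^ s := fun y k =>
    div_nonneg (hw0 _ _) (by positivity)
  have hterm_meas : ∀ k, Measurable fun y => w y (x k) / dist y (x k) ^ s := fun k =>
    (hwm _).div ((continuous_id.dist continuous_const).measurable.pow_const _)
  have hmin : ∀ y ∈ D, potentialErase s w x i (x i) ≤ potentialErase s w x i y :=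
    fun y hy => hx.potentialErase_le hsym i trivial fun k _ hyk =>
      hy (Set.mem_iUnion.2 ⟨k, hyk ▸ mem_closedBall_self hr.le⟩)
  calc ENNReal.ofReal (w (x i) (x j) / dist (x i) (x j) ^ s) * μ D
      ≤ ENNReal.ofReal (potentialErase s w x i (x i)) * μ D := by
        gcongr
        exact Finset.single_le_sum (fun k _ => hterm0 _ k)
          (Finset.mem_erase.2 ⟨hij.symm, Finset.mem_univ j⟩)
    _ = ∫⁻ _ in D, ENNReal.ofReal (potentialErase s w x i (x i)) ∂μ := (setLIntegral_const _ _).symm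
    _ ≤ ∫⁻ y in D, ENNReal.ofReal (potentialErase s w x i y) ∂μ :=
        setLIntegral_mono (Finset.measurable_sum _ fun k _ => hterm_meas k).ennreal_ofReal
          fun y hy => ENNReal.ofReal_le_ofReal (hmin y hy)
    _ = ∑ k ∈ Finset.univ.erase i,
          ∫⁻ y in D, ENNReal.ofReal (w y (x k) / dist y (x k) ^ s) ∂μ := by
        simp only [potentialErase, ENNReal.ofReal_sum_of_nonneg fun k _ => hterm0 _ k]
        exact lintegral_finsetSum' _ fun k _ => (hterm_meas k).ennreal_ofReal.aemeasurable
    _ ≤ _ := Finset.sum_le_sum fun k _ =>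
        lintegral_mono_set (Set.compl_subset_compl.2 (Set.subset_iUnion _ k))

theorem IsEnergyMinimizer.ofReal_div_rpow_mul_measure_le (hx : IsEnergyMinimizer s w Set.univ x)
    (hsym : ∀ a b, w a b = w b a) (hw0 : ∀ a b, 0 ≤ w a b) (hwm : ∀ z, Measurable fun y => w y z)
    {α C₀ : ℝ} (hα : 0 ≤ α) (hC₀ : 0 ≤ C₀)
    (hball : ∀ z t, 0 < t → μ (closedBall z t) ≤ ENNReal.ofReal (C₀ * t ^ α))
    {p q W : ℝ≥0∞} [p.HolderConjugate q] (hq : q ≠ ∞) (hαsq : α < s * q.toReal)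
    (hwp : ∀ z, eLpNorm (fun y => w y z) p μ ≤ W) {i j : Fin N} (hij : i ≠ j) {r : ℝ}
    (hr : 0 < r) :
    ENNReal.ofReal (w (x i) (x j) / dist (x i) (x j) ^ s) * μ (⋃ k, closedBall (x k) r)ᶜ ≤
      N * (W * ENNReal.ofReal (C₀ * 2 ^ α / (1 - 2 ^ (α - s * q.toReal)) *
        r ^ (α - s * q.toReal)) ^ (1 / q.toReal)) := by
  set B := W * ENNReal.ofReal (C₀ * 2 ^ α / (1 - 2 ^ (α - s * q.toReal)) *
    r ^ (α - s * q.toReal)) ^ (1 / q.toReal)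
  refine (hx.ofReal_div_rpow_mul_measure_le_sum hsym hw0 hwm hij hr).trans <|
    (Finset.sum_le_card_nsmul _ _ B fun k _ => ?_).trans ?_
  · exact (setLIntegral_div_rpow_le hq (hwm _).aestronglyMeasurable _ s _).trans <|
      mul_le_mul' (hwp _) <| ENNReal.rpow_le_rpow
        (lintegral_compl_closedBall_rpow_neg_le hC₀ (hα.trans hαsq.le) hαsq hball _ hr)
        (by positivity)
  · rw [nsmul_eq_mul]
    gcongr
    exact_mod_cast (Finset.card_erase_le).trans (Finset.card_univ.trans (Fintype.card_fin N)).le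

theorem exists_forall_isEnergyMinimizer_div_rpow_le {α C₀ : ℝ} (hα : 0 < α) (hC₀ : 0 < C₀)
    (hball : ∀ z t, 0 < t → μ (closedBall z t) ≤ ENNReal.ofReal (C₀ * t ^ α))
    (hμ : 0 < μ Set.univ) (hμfin : μ Set.univ ≠ ∞)
    (hsym : ∀ a b, w a b = w b a) (hw0 : ∀ a b, 0 ≤ w a b) (hwm : ∀ z, Measurable fun y => w y z)
    {p W : ℝ≥0∞} (hp : 1 < p) (hW : W ≠ ∞) (hwp : ∀ z, eLpNorm (fun y => w y z) p μ ≤ W)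
    (hs : α * (1 - 1 / p.toReal) < s) :
    ∃ E > 0, ∀ (N : ℕ) (x : Fin N → A), IsEnergyMinimizer s w Set.univ x → ∀ i j, i ≠ j →
      w (x i) (x j) / dist (x i) (x j) ^ s ≤ E * (N : ℝ) ^ (s / α + 1 / p.toReal) := by
  have : p.HolderConjugate (ENNReal.conjExponent p) := .conjExponent hp.le
  have hq_top : ENNReal.conjExponent p ≠ ∞ :=
    ((ENNReal.HolderConjugate.lt_top_iff_one_lt _ p).2 hp).ne
  set q := (ENNReal.conjExponent p).toReal
  have hq : 0 < q := ENNReal.toReal_pos (ENNReal.HolderConjugate.ne_zero _ p) hq_top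
  have hpq : 1 / q = 1 - 1 / p.toReal := ENNReal.HolderConjugate.one_div_toReal_eq
  have hαsq : α < s * q := by
    rw [← hpq, mul_one_div, div_lt_iff₀ hq] at hs; exact hs
  set m := (μ Set.univ).toReal
  have hm : 0 < m := ENNReal.toReal_pos hμ.ne' hμfin
  set c := (m / (2 * C₀)) ^ (1 / α)
  set K := C₀ * 2 ^ α / (1 - 2 ^ (α - s * q))
  have hK : 0 < K := div_pos (by positivity) (sub_pos.2 <|
    Real.rpow_lt_one_of_one_lt_of_neg one_lt_two (sub_neg.2 hαsq))
  -- `W.toReal + 1` rather than `W.toReal` keeps the constant positive when `W = 0`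
  refine ⟨(W.toReal + 1) * K ^ (1 / q) * c ^ ((α - s * q) / q) / (m / 2), by positivity, ?_⟩
  intro N x hx i j hij
  have hn : (0 : ℝ) < N := Nat.cast_pos.2 (Fin.pos i)
  have hW' : W ≤ ENNReal.ofReal (W.toReal + 1) :=
    (ENNReal.ofReal_toReal hW).symm.trans_le (ENNReal.ofReal_le_ofReal (by linarith))
  have hchain := (mul_le_mul_right
    (ofReal_half_le_measure_compl_iUnion_closedBall hα hC₀ hball hμ hμfin (Fin.pos i) x) _).trans <|
    hx.ofReal_div_rpow_mul_measure_le hsym hw0 hwm hα.le hC₀.le hball hq_top hαsq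
      (fun z => (hwp z).trans hW') hij (by positivity)
  rw [← ENNReal.ofReal_mul (div_nonneg (hw0 _ _) (by positivity)),
    ENNReal.ofReal_rpow_of_nonneg (by positivity) (by positivity),
    ← ENNReal.ofReal_mul (by positivity), ← ENNReal.ofReal_natCast,
    ← ENNReal.ofReal_mul (by positivity), ENNReal.ofReal_le_ofReal_iff (by positivity),
    mul_left_comm, mul_mul_rpow_rpow_eq hn (by positivity) hK.le hα.ne'] at hchain
  have hexp : 1 + (s * q / α - 1) / q = s / α + 1 / p.toReal := by
    have : (s * q / α - 1) / q = s / α - 1 / q := by field_simp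
    rw [this, hpq]
    ring
  rw [hexp] at hchain
  rw [div_mul_eq_mul_div, le_div_iff₀ (by positivity)]
  simpa only [mul_assoc] using hchain

end Minimizer

theorem stmt_0_general {A : Type*} [MetricSpace A] [CompactSpace A] [Infinite A]
    [MeasurableSpace A] [BorelSpace A]
    (α : ℝ) (hα : 0 < α) (μ : Measure A) (C₀ : ℝ)
    (hreg : IsUpperRegular μ α C₀) (hμpos : 0 < μ Set.univ)
    (w : A → A → ℝ) (hw : IsSLPWeight w Set.univ)
    (p₀ p : ℝ≥0∞)
    (hwLp : ∃ M : ℝ, ∀ x : A, eLpNorm (fun y => w y x) p₀ μ ≤ ENNReal.ofReal M)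
    (hp : 1 < p) (hpp₀ : p ≤ p₀)
    (s : ℝ) (hs : s > α * (1 - 1 / p.toReal)) :
    ∃ C₁ > 0, ∀ N : ℕ, 2 ≤ N → ∀ x : Fin N → A,
      IsEnergyMinimizer s w Set.univ x →
      sepDist x ≥ C₁ * (N : ℝ) ^ (-(1 / α + 1 / (s * p.toReal))) := by
  obtain ⟨M, hM⟩ := hwLp
  obtain ⟨hw0, hsym, hlsc, hdiag⟩ := hw
  simp only [Set.mem_univ, forall_const, Set.univ_prod_univ, lowerSemicontinuousOn_univ_iff]
    at hw0 hsym hlsc hdiag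
  have hC₀ := hreg.const_pos hμpos
  have hμfin := hreg.measure_univ_ne_top
  have hwm : ∀ z, Measurable fun y => w y z := fun z =>
    (hlsc.comp (continuous_id.prodMk continuous_const)).measurable
  have hwp : ∀ z, eLpNorm (fun y => w y z) p μ ≤
      ENNReal.ofReal M * μ Set.univ ^ (1 / p.toReal - 1 / p₀.toReal) := fun z =>
    (eLpNorm_le_eLpNorm_mul_rpow_measure_univ hpp₀ (hwm z).aestronglyMeasurable).trans
      (by gcongr; exact hM z)
  obtain ⟨E, hE, hEnergy⟩ := exists_forall_isEnergyMinimizer_div_rpow_le hα hC₀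
    (hreg.measure_closedBall_le hα.le hC₀.le) hμpos hμfin hsym hw0 hwm hp
    (ENNReal.mul_ne_top ENNReal.ofReal_ne_top (ENNReal.rpow_ne_top_of_ne_zero hμpos.ne' hμfin))
    hwp hs
  obtain ⟨ε, hε, c, hc, hnear⟩ := hlsc.exists_pos_lt_of_dist_lt hdiag
  have hs0 : 0 < s := pos_of_mul_one_sub_one_div_toReal_lt hα.le hp.le hs
  refine ⟨min ε ((c / E) ^ (1 / s)), by positivity, fun N hN x hx => ?_⟩
  obtain ⟨i, j, hij, hδ⟩ := exists_dist_eq_sepDist hN x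
  rw [← hδ, ge_iff_le]
  refine min_mul_rpow_neg_le hε.le (by positivity) (by exact_mod_cast one_le_two.trans hN)
    (by positivity) fun hδε => le_of_div_rpow_le_mul_rpow hc.le (dist_pos.2 (hx.1.ne hij)) hE
      (by positivity) hs0 ?_
  calc c / dist (x i) (x j) ^ s ≤ w (x i) (x j) / dist (x i) (x j) ^ s := by
        gcongr; exact (hnear _ _ hδε).le
    _ ≤ E * (N : ℝ) ^ (s / α + 1 / p.toReal) := hEnergy N x hx i j hij
    _ = _ := by congr 2; field_simp

/-- Theorem `separation`: separation of weighted minimal energy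
configurations on an upper `α`-regular compact metric space. -/
theorem stmt_0 {A : Type*} [MetricSpace A] [CompactSpace A] [Infinite A]
    [MeasurableSpace A] [BorelSpace A]
    (α : ℝ) (hα : 0 < α) (μ : Measure A) (C₀ : ℝ)
    (hreg : IsUpperRegular μ α C₀) (hμpos : 0 < μ Set.univ)
    (w : A → A → ℝ) (hw : IsSLPWeight w Set.univ)
    (p₀ p : ℝ≥0∞) (hp₀ : 1 < p₀)
    (hwLp : ∃ M : ℝ, ∀ x : A, eLpNorm (fun y => w y x) p₀ μ ≤ ENNReal.ofReal M)
    (hp : 1 < p) (hpp₀ : p ≤ p₀)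
    (s : ℝ) (hs : s > α * (1 - 1 / p.toReal)) :
    ∃ C₁ > 0, ∀ N : ℕ, 2 ≤ N → ∀ x : Fin N → A,
      IsEnergyMinimizer s w Set.univ x →
      sepDist x ≥ C₁ * (N : ℝ) ^ (-(1 / α + 1 / (s * p.toReal))) :=
  stmt_0_general α hα μ C₀ hreg hμpos w hw p₀ p hwLp hp hpp₀ s hs
end
end

section
/- Let A be a compact metric space and β ∈ (0,1) such that for every x ∈ A and every r ∈ (0, diam(A)], the annulus B(x,r) \ B(x, βr) is nonempty. Then for every N ≥ 2 and every N-point configuration ω_N of distinct points in A, the mesh-separation ratio satisfies γ(ω_N, A) = ρ(ω_N, A)/δ(ω_N) ≥ β/2. -/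
open Metric MeasureTheory Filter
open scoped ENNReal NNReal

noncomputable section

variable {A : Type*} [MetricSpace A]

/-! If `x i`, `x j` realize the separation distance `δ`, the annulus hypothesis at `x i` with
radius `δ / 2` gives a point `y` with `β δ / 2 < d(y, x i) ≤ δ / 2`. Every other point `x k`
is at distance at least `δ` from `x i`, hence at least `δ / 2` from `y`, so `y` is at distance
at least `β δ / 2` from the whole configuration and `ρ ≥ β δ / 2`. -/

lemma sepDist_le_dist {N : ℕ} (x : Fin N → A) {i j : Fin N} (hij : i ≠ j) :
    sepDist x ≤ dist (x i) (x j) :=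
  csInf_le ⟨0, by rintro _ ⟨_, _, _, rfl⟩; exact dist_nonneg⟩ ⟨i, j, hij, rfl⟩

lemma exists_sepDist_eq_dist {N : ℕ} (hN : 1 < N) (x : Fin N → A) :
    ∃ i j : Fin N, i ≠ j ∧ sepDist x = dist (x i) (x j) := by
  have hfin : {d : ℝ | ∃ i j : Fin N, i ≠ j ∧ d = dist (x i) (x j)}.Finite :=
    (Set.finite_range fun p : Fin N × Fin N => dist (x p.1) (x p.2)).subset
      (by rintro _ ⟨i, j, -, rfl⟩; exact ⟨(i, j), rfl⟩)
  have hne : {d : ℝ | ∃ i j : Fin N, i ≠ j ∧ d = dist (x i) (x j)}.Nonempty :=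
    ⟨_, ⟨0, by omega⟩, ⟨1, hN⟩, by simp [Fin.ext_iff], rfl⟩
  exact hne.csInf_mem hfin

lemma iInf_dist_le_meshNorm {N : ℕ} [Nonempty (Fin N)] (x : Fin N → A) {K : Set A}
    (hK : Bornology.IsBounded K) {y : A} (hy : y ∈ K) :
    ⨅ i, dist y (x i) ≤ meshNorm x K := by
  obtain ⟨i₀⟩ := ‹Nonempty (Fin N)›
  obtain ⟨r, hr⟩ := hK.subset_closedBall (x i₀)
  refine le_csSup ⟨r, ?_⟩ ⟨y, hy, rfl⟩
  rintro _ ⟨z, hz, rfl⟩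
  exact (ciInf_le ⟨0, by rintro _ ⟨i, rfl⟩; exact dist_nonneg⟩ i₀).trans (hr hz)

lemma le_iInf_dist_of_dist_le_half_sepDist {N : ℕ} (x : Fin N → A) {i : Fin N} {y : A}
    {t : ℝ} (hy : dist y (x i) ≤ sepDist x / 2) (hty : t ≤ dist y (x i)) :
    t ≤ ⨅ k, dist y (x k) := by
  have : Nonempty (Fin N) := ⟨i⟩
  refine le_ciInf fun k => ?_
  rcases eq_or_ne k i with rfl | hki
  · exact hty
  · have hsep := sepDist_le_dist x hki.symm
    have htri := dist_triangle_left (x i) (x k) y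
    linarith

theorem stmt_12_general {A : Type*} [MetricSpace A] [CompactSpace A]
    (β : ℝ)
    (hann : ∀ (x : A) (r : ℝ), 0 < r → r ≤ diam (Set.univ : Set A) →
      ∃ y : A, y ∈ closedBall x r ∧ y ∉ closedBall x (β * r))
    (N : ℕ) (hN : 2 ≤ N) (x : Fin N → A) (hx : Function.Injective x) :
    meshNorm x Set.univ / sepDist x ≥ β / 2 := by
  obtain ⟨i, j, hij, hδ⟩ := exists_sepDist_eq_dist hN x
  have hδpos : 0 < sepDist x := hδ ▸ dist_pos.2 (hx.ne hij)
  have hδdiam : sepDist x ≤ diam (Set.univ : Set A) :=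
    hδ ▸ dist_le_diam_of_mem isCompact_univ.isBounded trivial trivial
  obtain ⟨y, hy_le, hy_gt⟩ := hann (x i) (sepDist x / 2) (by linarith) (by linarith)
  rw [mem_closedBall, not_le] at hy_gt
  rw [mem_closedBall] at hy_le
  have hβδ : β * sepDist x / 2 ≤ ⨅ k, dist y (x k) :=
    le_iInf_dist_of_dist_le_half_sepDist x hy_le (by linarith)
  have : Nonempty (Fin N) := ⟨i⟩
  have hρ := hβδ.trans (iInf_dist_le_meshNorm x isCompact_univ.isBounded (Set.mem_univ y))
  rw [ge_iff_le, le_div_iff₀ hδpos]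
  linarith

/-- if every annulus `B(x,r) \ B(x,βr)` (for `0 < r ≤ diam A`) is
nonempty, then every configuration has mesh-separation ratio at least `β/2`. -/
theorem stmt_12 {A : Type*} [MetricSpace A] [CompactSpace A]
    (β : ℝ) (hβ : β ∈ Set.Ioo (0 : ℝ) 1)
    (hann : ∀ (x : A) (r : ℝ), 0 < r → r ≤ diam (Set.univ : Set A) →
      ∃ y : A, y ∈ closedBall x r ∧ y ∉ closedBall x (β * r))
    (N : ℕ) (hN : 2 ≤ N) (x : Fin N → A) (hx : Function.Injective x) :
    meshNorm x Set.univ / sepDist x ≥ β / 2 :=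
  stmt_12_general β hann N hN x hx
end
end
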